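/- The noncommutative Boussinesq lattice system (a-b)·q = (p + q·q₁₁ - r₁₁)(p₀₁ - p₁₀), (b-a) = (q₀₁ - q₁₀)(p + q·q₁₁ - r₁₁), (b-a)·q₁₁ = (r₀₁ - r₁₀)(p + q·q₁₁ - r₁₁) admits the Lax representation L(p₀₁, q₀₁, q₁₁, r₁₁, a)·L(p, q, q₀₁, r₀₁, b) = L(p₁₀, q₁₀, q₁₁, r₁₁, b)·L(p, q, q₁₀, r₁₀, a), i.e. these matrix equalities hold for all λ whenever the three lattice equations hold (with p + q·q₁₁ - r₁₁ invertible). -/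

import Mathlib

/-!
Dividing the three lattice equations by `S = p + q q₁₁ - r₁₁` shows that the shifts
`q₀₁ - q₁₀`, `p₀₁ - p₁₀`, `r₀₁ - r₁₀` are `d`, `-d q` and `q₁₁ d` for the single element
`d = (b - a) S⁻¹`, using that `b - a` is central. After this substitution every entry of the
difference of the two sides of the Lax equation is a combination of `S d = d S = b - a` and of
the commutation of `a` and `λ` with `d`.
-/

def LB {R : Type*} [DivisionRing R] (p q q' r' a lam : R) :
    Matrix (Fin 3) (Fin 3) R :=
  !![-q', 1, 0;
     -r', 0, 1;
     a - p * q' - q * r' - lam, p, q]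

theorem LB_mul_LB_of_shift {R : Type*} [DivisionRing R] {a b p q p10 q10 q11 r10 r11 d lam : R}
    (hSd : (p + q * q11 - r11) * d = b - a) (hdS : d * (p + q * q11 - r11) = b - a)
    (ha : Commute a d) (hlam : Commute lam d) :
    LB (p10 - d * q) (q10 + d) q11 r11 a lam * LB p q (q10 + d) (r10 + q11 * d) b lam
      = LB p10 q10 q11 r11 b lam * LB p q q10 r10 a lam := by
  simp only [LB, Matrix.mul_fin_three, EmbeddingLike.apply_eq_iff_eq, Matrix.vecCons_inj, and_true]
  refine ⟨?_, ?_, ?_, ?_, ?_⟩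
  · noncomm_ring
  · linear_combination (norm := noncomm_ring) -hSd
  · linear_combination (norm := noncomm_ring) -((q10 + d) * hSd) - hdS * q10 - ha.eq + hlam.eq
  · linear_combination (norm := noncomm_ring) hdS
  · noncomm_ring

theorem boussinesq_lattice_lax_general {R : Type*} [DivisionRing R]
    (a b p q p10 p01 q10 q01 q11 r10 r01 r11 : R)
    (ha : ∀ s : R, a * s = s * a) (hb : ∀ s : R, b * s = s * b)
    (hS : p + q * q11 - r11 ≠ 0)
    (e1 : (p + q * q11 - r11) * (p01 - p10) = (a - b) * q)
    (e2 : (q01 - q10) * (p + q * q11 - r11) = b - a)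
    (e3 : (r01 - r10) * (p + q * q11 - r11) = (b - a) * q11) :
    ∀ lam : R, (∀ s : R, lam * s = s * lam) →
      LB p01 q01 q11 r11 a lam * LB p q q01 r01 b lam
        = LB p10 q10 q11 r11 b lam * LB p q q10 r10 a lam := by
  intro lam hlam
  set S := p + q * q11 - r11
  set d := (b - a) * S⁻¹
  have hcentral : ∀ s, Commute (b - a) s := fun s => Commute.sub_left (hb s) (ha s)
  have hdS : d * S = b - a := inv_mul_cancel_right₀ hS _
  have hSd : S * d = b - a := by rw [← mul_assoc, ← (hcentral S).eq, mul_inv_cancel_right₀ hS]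
  have hq : q01 = q10 + d := sub_eq_iff_eq_add'.mp (mul_right_cancel₀ hS (e2.trans hdS.symm))
  have hp : p01 = p10 - d * q := by
    have hdiff : p01 - p10 = -(d * q) := mul_left_cancel₀ hS <| by
      rw [e1, mul_neg, ← mul_assoc, hSd, ← neg_mul, neg_sub]
    rw [← sub_add_cancel p01 p10, hdiff, neg_add_eq_sub]
  have hr : r01 = r10 + q11 * d := by
    refine sub_eq_iff_eq_add'.mp (mul_right_cancel₀ hS ?_)
    rw [e3, mul_assoc, hdS, (hcentral q11).eq]
  rw [hq, hp, hr]
  exact LB_mul_LB_of_shift hSd hdS (ha d) (hlam d)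

/-- The noncommutative Boussinesq lattice system admits the Lax representation
`L(p₀₁,q₀₁,q₁₁,r₁₁,a) L(p,q,q₀₁,r₀₁,b) = L(p₁₀,q₁₀,q₁₁,r₁₁,b) L(p,q,q₁₀,r₁₀,a)`
for all central `λ`, whenever the three lattice equations hold (with
`p + q q₁₁ - r₁₁` invertible). -/
theorem boussinesq_lattice_lax {R : Type*} [DivisionRing R]
    (a b p q r p10 p01 q10 q01 q11 r10 r01 r11 : R)
    (ha : ∀ s : R, a * s = s * a) (hb : ∀ s : R, b * s = s * b)
    (hS : p + q * q11 - r11 ≠ 0)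
    (e1 : (p + q * q11 - r11) * (p01 - p10) = (a - b) * q)
    (e2 : (q01 - q10) * (p + q * q11 - r11) = b - a)
    (e3 : (r01 - r10) * (p + q * q11 - r11) = (b - a) * q11) :
    ∀ lam : R, (∀ s : R, lam * s = s * lam) →
      LB p01 q01 q11 r11 a lam * LB p q q01 r01 b lam
        = LB p10 q10 q11 r11 b lam * LB p q q10 r10 a lam :=
  boussinesq_lattice_lax_general a b p q p10 p01 q10 q01 q11 r10 r01 r11 ha hb hS e1 e2 e3
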